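/- Let A_Γ = ⟨a_σ : σ ∈ Γ⟩ be a T-algebra, let x ∈ X(Γ,ℵ₀) with λ_x = dom(x) (an infinite countable limit ordinal), let e : ℕ → λ_x be a bijection, and let π : ℕ → ℕ be a permutation. Writing a^x_α = a_{x↾(α+1)}, define recursively c_n = a^x_{e(n)} ∖ ⋃_{k<n} c_k, set L_x = {n : c_n ≠ ∅}, and define Γ^x = Γ ∪ {x⌢σ : σ ∈ 2^{<ω}}, a_x = ∅, a_{x⌢(σ⌢0)} = ⋃{c_k : σ⌢1 ⊆ σ_{π(k)}}, and a_{x⌢(σ⌢1)} = ℕ ∖ a_{x⌢(σ⌢0)} for σ ∈ 2^{<ω}, where ⟨σ_k⟩ is the standard length-lexicographic enumeration of 2^{<ω}. If [σ] ∩ {σ_k : k ∈ π[L_x]} is nonempty for every σ ∈ 2^{<ω}, then the extended family A_Γ ∪ ⟨a_{x⌢σ} : σ ∈ 2^{<ω}⟩ is a T-algebra on Γ^x. -/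

import Mathlib

open Set

noncomputable section

/-- The least uncountable ordinal `ω₁`. -/
def omega1 : Ordinal := (Cardinal.aleph 1).ord

/-- `⋃_{γ ∈ F} a_γ` for a finite set `F` of indices. -/
def unionFin (a : Ordinal → Set ℕ) (F : Finset Ordinal) : Set ℕ :=
  ⋃ γ ∈ F, a γ

/-- A sequence of subsets of `ℕ`, with indices from a (downward closed) domain `D`
of ordinals, is coherent if for all `α ≤ β` in the domain there is a finite `F ⊆ α`
with `a α ∩ a β ⊆ ⋃_{γ∈F} a γ` or `a α ⊆ a β ∪ ⋃_{γ∈F} a γ`. -/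
def CoherentOn (D : Set Ordinal) (a : Ordinal → Set ℕ) : Prop :=
  ∀ α β : Ordinal, α ≤ β → β ∈ D →
    ∃ F : Finset Ordinal, (∀ γ ∈ F, γ < α) ∧
      (a α ∩ a β ⊆ unionFin a F ∨ a α ⊆ a β ∪ unionFin a F)

/-- Properness: no `a β` is contained in a finite union of earlier terms. -/
def ProperOn (D : Set Ordinal) (a : Ordinal → Set ℕ) : Prop :=
  ∀ β ∈ D, ∀ F : Finset Ordinal, (∀ γ ∈ F, γ < β) → ¬ a β ⊆ unionFin a F

/-- `â_β = { α ≤ β : a α ∖ a β ⊆ ⋃_{γ∈F} a γ for some finite F ⊆ α }`. -/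
def hatA (a : Ordinal → Set ℕ) (β : Ordinal) : Set Ordinal :=
  { α | α ≤ β ∧ ∃ F : Finset Ordinal, (∀ γ ∈ F, γ < α) ∧ a α \ a β ⊆ unionFin a F }

/-- The topology `τ(A)` on `λ + 1 = {α : α ≤ λ}` generated by the subbase
consisting of the sets `â_β` and their complements, `β < λ`. -/
def tau (lam : Ordinal) (a : Ordinal → Set ℕ) :
    TopologicalSpace {α : Ordinal // α ≤ lam} :=
  TopologicalSpace.generateFrom
    { s | ∃ β < lam, s = {x : {α : Ordinal // α ≤ lam} | x.1 ∈ hatA a β} ∨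
                     s = {x : {α : Ordinal // α ≤ lam} | x.1 ∈ hatA a β}ᶜ }

/-- The subspace `ω₁ = {α : α < ω₁}` of `(ω₁+1, τ(A))`. -/
def tauSub (a : Ordinal → Set ℕ) : TopologicalSpace {y : Ordinal // y < omega1} :=
  TopologicalSpace.induced
    (fun y : {y : Ordinal // y < omega1} => (⟨y.1, y.2.le⟩ : {α : Ordinal // α ≤ omega1}))
    (tau omega1 a)

/-- Closed unbounded subsets of `ω₁`. -/
def IsClubOmega1 (C : Set Ordinal) : Prop :=
  C ⊆ Iio omega1 ∧
  (∀ α < omega1, ∃ β ∈ C, α ≤ β) ∧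
  (∀ δ, δ < omega1 → δ ≠ 0 → (∀ α < δ, ∃ β ∈ C, α < β ∧ β < δ) → δ ∈ C)

/-- Stationary subsets of `ω₁`: sets meeting every club. -/
def IsStationaryOmega1 (S : Set Ordinal) : Prop :=
  ∀ C : Set Ordinal, IsClubOmega1 C → (S ∩ C).Nonempty

/-- The stationary covering property for a coherent sequence whose index domain is `D`:
if the sequence has length `ω₁` (i.e. `Iio ω₁ ⊆ D`), then every stationary `S ⊆ ω₁`
together with some finite `F` covers, i.e. `⋃_{γ ∈ S ∪ F} â_γ = ω₁`.  (Sequences of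
length `< ω₁` have the ScP by convention.) -/
def HasScP (D : Set Ordinal) (a : Ordinal → Set ℕ) : Prop :=
  Iio omega1 ⊆ D →
    ∀ S : Set Ordinal, S ⊆ Iio omega1 → IsStationaryOmega1 S →
      ∃ F : Finset Ordinal, (⋃ γ ∈ S ∪ (↑F : Set Ordinal), hatA a γ) = Iio omega1

/-- A node of the tree `2^{≤ω₁}`: a function `val` defined on the ordinals `< len`
(with the canonical value `false` beyond `len`). -/
structure Node where
  len : Ordinal
  val : Ordinal → Bool
  canon : ∀ α, len ≤ α → val α = false

open Classical in
/-- The restriction `x ↾ β`. -/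
def Node.restrict (x : Node) (β : Ordinal) : Node where
  len := β
  val := fun α => if α < β then x.val α else false
  canon := fun α h => if_neg (not_lt.2 h)

/-- `τ.Extends σ` means `σ ⊆ τ`, i.e. `τ` extends `σ`. -/
def Node.Extends (τ σ : Node) : Prop :=
  σ.len ≤ τ.len ∧ ∀ α < σ.len, τ.val α = σ.val α

/-- Successor ordinals. -/
def IsSucc (o : Ordinal) : Prop := ∃ β, o = β + 1

open Classical in
/-- `σ†`: if `σ` has successor length `β+1`, the node agreeing with `σ` except at `β`;
otherwise `σ` itself. -/
def Node.dagger (σ : Node) : Node :=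
  if h : IsSucc σ.len then
    { len := σ.len
      val := fun α => if α = Classical.choose h then !(σ.val α) else σ.val α
      canon := by
        intro α hα
        have hs := Classical.choose_spec h
        have hne : α ≠ Classical.choose h := by
          intro he
          rw [hs, he] at hα
          rw [Ordinal.add_one_eq_succ] at hα
          exact absurd hα (not_le.2 (Order.lt_succ (Classical.choose h)))
        show (if α = Classical.choose h then !(σ.val α) else σ.val α) = false
        rw [if_neg hne]
        exact σ.canon α hα }
  else σ

open Classical in
/-- `σ ⌢ b` : the node `σ` extended by one value `b`. -/
def Node.snoc (σ : Node) (b : Bool) : Node where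
  len := σ.len + 1
  val := fun α => if α = σ.len then b else σ.val α
  canon := by
    intro α hα
    have h1 : σ.len < α := by
      have h2 : σ.len < σ.len + 1 := by
        rw [Ordinal.add_one_eq_succ]; exact Order.lt_succ σ.len
      exact lt_of_lt_of_le h2 hα
    show (if α = σ.len then b else σ.val α) = false
    rw [if_neg h1.ne']
    exact σ.canon α h1.le

open Classical in
/-- `x ⌢ σ` : concatenation of nodes. -/
def Node.append (x σ : Node) : Node where
  len := x.len + σ.len
  val := fun α => if α < x.len then x.val α else σ.val (α - x.len)
  canon := by
    intro α hα
    have h1 : ¬ α < x.len := not_lt.2 (le_trans (le_add_of_nonneg_right (zero_le (a := σ.len))) hα)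
    show (if α < x.len then x.val α else σ.val (α - x.len)) = false
    rw [if_neg h1]
    apply σ.canon
    by_contra h2
    rw [not_le] at h2
    have h3 : α ≤ x.len + (α - x.len) := Ordinal.le_add_sub α x.len
    have h4 : x.len + (α - x.len) < x.len + σ.len := (add_lt_add_iff_left x.len).2 h2
    exact absurd hα (not_le.2 (lt_of_le_of_lt h3 h4))

/-- A subtree of `2^{<ω₁}` that is downward closed, twinned and has no maximal elements. -/
structure GoodTree (Γ : Set Node) : Prop where
  lt_omega1 : ∀ σ ∈ Γ, σ.len < omega1
  downward : ∀ σ ∈ Γ, ∀ β ≤ σ.len, σ.restrict β ∈ Γ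
  twinned : ∀ σ ∈ Γ, σ.dagger ∈ Γ
  noMax : ∀ σ ∈ Γ, ∃ τ ∈ Γ, σ.len < τ.len ∧ τ.Extends σ

/-- `X(Γ)`: the maximal branches of `Γ`, i.e. the minimal elements of `2^{≤ω₁} ∖ Γ`. -/
def XGamma (Γ : Set Node) : Set Node :=
  { x | x.len ≤ omega1 ∧ x ∉ Γ ∧ ∀ β < x.len, x.restrict β ∈ Γ }

/-- The index domain of the branch sequence `A_{Γ,x}`. -/
def branchDomain (Γ : Set Node) (x : Node) : Set Ordinal :=
  { α | α + 1 ≤ x.len ∧ x.restrict (α + 1) ∈ Γ }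

/-- The branch sequence `A_{Γ,x}`, `a^x_α = a_{x ↾ (α+1)}`. -/
def branchSeq (a : Node → Set ℕ) (x : Node) : Ordinal → Set ℕ :=
  fun α => a (x.restrict (α + 1))

/-- A `𝕋`-algebra on the tree `Γ`. -/
structure IsTAlgebra (Γ : Set Node) (a : Node → Set ℕ) : Prop where
  tree : GoodTree Γ
  empty_of_not_succ : ∀ σ ∈ Γ, ¬ IsSucc σ.len → a σ = ∅
  compl_dagger : ∀ σ ∈ Γ, IsSucc σ.len → a σ.dagger = (a σ)ᶜ
  branch_coherent : ∀ x : Node, x.len ≤ omega1 →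
    CoherentOn (branchDomain Γ x) (branchSeq a x)
  branch_proper : ∀ x : Node, x.len ≤ omega1 →
    ProperOn (branchDomain Γ x) (branchSeq a x)

/-- The Boolean subalgebra of `P(ℕ)` generated by a family `G`. -/
inductive GenBool (G : Set (Set ℕ)) : Set ℕ → Prop
  | basic (s : Set ℕ) : s ∈ G → GenBool G s
  | empty : GenBool G ∅
  | compl (s : Set ℕ) : GenBool G s → GenBool G sᶜ
  | inter (s t : Set ℕ) : GenBool G s → GenBool G t → GenBool G (s ∩ t)

/-- `B_Γ`: the Boolean subalgebra of `P(ℕ)` generated by `{a_σ : σ ∈ Γ}`. -/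
def BGamma (Γ : Set Node) (a : Node → Set ℕ) : Set (Set ℕ) :=
  { b | GenBool { s | ∃ σ ∈ Γ, s = a σ } b }

/-- A finite intersection from the family `{ℕ ∖ a_{x↾(α+1)} : α + 1 ≤ λ_x}`. -/
def finInterCompl (a : Node → Set ℕ) (x : Node) (F : Finset Ordinal) : Set ℕ :=
  ⋂ α ∈ F, (a (x.restrict (α + 1)))ᶜ

/-- The ultrafilter `U_x` on `B_Γ` generated by the finite intersections of
`{ℕ ∖ a_{x↾(α+1)} : α + 1 ≤ λ_x}`. -/
def Ux (Γ : Set Node) (a : Node → Set ℕ) (x : Node) : Set (Set ℕ) :=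
  { b | b ∈ BGamma Γ a ∧
    ∃ F : Finset Ordinal, (∀ α ∈ F, α + 1 ≤ x.len) ∧ finInterCompl a x F ⊆ b }

/-- The Stone topology on `X(Γ)`, with subbasic open sets `{z : b ∈ U_z}`, `b ∈ B_Γ`. -/
def stoneTop (Γ : Set Node) (a : Node → Set ℕ) :
    TopologicalSpace {z : Node // z ∈ XGamma Γ} :=
  TopologicalSpace.generateFrom
    { s | ∃ b ∈ BGamma Γ a, s = { z : {z : Node // z ∈ XGamma Γ} | b ∈ Ux Γ a z.1 } }

/-- An ultrafilter on a Boolean subalgebra `B` of `P(ℕ)`. -/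
def IsUltrafilterOn (B U : Set (Set ℕ)) : Prop :=
  U ⊆ B ∧
  (∀ s ∈ U, ∀ t ∈ U, s ∩ t ∈ U) ∧
  (∀ s ∈ U, ∀ t ∈ B, s ⊆ t → t ∈ U) ∧
  ∅ ∉ U ∧
  (∀ b ∈ B, Xor' (b ∈ U) (bᶜ ∈ U))

/-- The length-lexicographic (strict) order on finite binary strings. -/
def LenLexLT (σ τ : Node) : Prop :=
  σ.len < τ.len ∨ (σ.len = τ.len ∧ ∃ i < σ.len, σ.val i = false ∧ τ.val i = true ∧
    ∀ j < i, σ.val j = τ.val j)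

/-- `e` is the standard length-lexicographic enumeration of `2^{<ω}`. -/
def IsStdEnum (e : ℕ → Node) : Prop :=
  (∀ k, (e k).len < Ordinal.omega0) ∧
  (∀ σ : Node, σ.len < Ordinal.omega0 → ∃ k, e k = σ) ∧
  (∀ k l : ℕ, k < l → LenLexLT (e k) (e l))

/-- `⋃_{k<n} c^x_k` where `c^x_n = a^x_{e(n)} ∖ ⋃_{k<n} c^x_k` (recursively). -/
def cUnion (a : Node → Set ℕ) (x : Node) (eb : ℕ → Ordinal) : ℕ → Set ℕ
  | 0 => ∅
  | n + 1 => cUnion a x eb n ∪ (a (x.restrict (eb n + 1)) \ cUnion a x eb n)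

/-- `c^x_n = a^x_{e(n)} ∖ ⋃_{k<n} c^x_k`. -/
def cSeq (a : Node → Set ℕ) (x : Node) (eb : ℕ → Ordinal) (n : ℕ) : Set ℕ :=
  a (x.restrict (eb n + 1)) \ cUnion a x eb n

/-- `{x ⌢ σ : σ ∈ 2^{<ω}}`. -/
def appendSet (x : Node) : Set Node :=
  { τ | ∃ σ : Node, σ.len < Ordinal.omega0 ∧ τ = x.append σ }

/-- The defining equations of the extension `A_Γ[π,x]`:
`a_x = ∅`, `a_{x⌢(σ⌢0)} = ⋃{c^x_k : σ⌢1 ⊆ σ_{π(k)}}`, `a_{x⌢(σ⌢1)} = ℕ ∖ a_{x⌢(σ⌢0)}`. -/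
def ExtEquations (e : ℕ → Node) (π : ℕ → ℕ) (a : Node → Set ℕ) (x : Node)
    (eb : ℕ → Ordinal) (a' : Node → Set ℕ) : Prop :=
  a' x = ∅ ∧
  ∀ σ : Node, σ.len < Ordinal.omega0 →
    (a' (x.append (σ.snoc false)) =
      ⋃ k ∈ { k : ℕ | (e (π k)).Extends (σ.snoc true) }, cSeq a x eb k) ∧
    (a' (x.append (σ.snoc true)) = (a' (x.append (σ.snoc false)))ᶜ)

/-- The full tree `2^{<ω₁}`. -/
def GammaFull : Set Node := { σ | σ.len < omega1 }

theorem natLtOmega1 (n : ℕ) : (n : Ordinal) < omega1 := by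
  have h1 : (n : Ordinal) < Ordinal.omega0 := Ordinal.nat_lt_omega0 n
  have h2 : Ordinal.omega0 < omega1 := by
    rw [omega1, ← Cardinal.ord_aleph0]
    exact Cardinal.ord_lt_ord.2 (by rw [← Cardinal.aleph_zero]
                                    exact Cardinal.aleph_lt_aleph.2 zero_lt_one)
  exact h1.trans h2

/-!
Write `f n = a^x_{e(n)}`, so that the `c_n` are the cells `disjointed f`. Coherence along `x`
shows that each `f n` lies in a single cell up to finitely many earlier terms, so every union of
cells — in particular every new set `a_{x⌢σ}` and its complement — coheres with all old terms of
the branch. A cell `c_k` lies in `a_{x⌢ρ⌢b}` when `σ_{π k}` extends `ρ⌢(1-b)` and misses it when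
`σ_{π k}` extends `ρ⌢b`; hence along a branch through `x` two new sets are disjoint or nested.
For properness of a new term `a_{x⌢ρ⌢b}`, the hypothesis on `π[L_x]` yields a nonempty cell `c_k`
with `σ_{π k} ⊇ ρ⌢(1-b)` and `k` as large as we like: it lies in `a_{x⌢ρ⌢b}`, but misses the
finitely many earlier old terms (they are contained in `⋃_{j<k} c_j`) and the earlier new ones.
Branches that do not pass through `x` only see terms of `Γ`.
-/

namespace Node

theorem ext {x y : Node} (hlen : x.len = y.len) (hval : ∀ α < x.len, x.val α = y.val α) :
    x = y := by
  obtain ⟨l, v, c⟩ := x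
  obtain ⟨l', v', c'⟩ := y
  obtain rfl : l = l' := hlen
  obtain rfl : v = v' := funext fun α =>
    (lt_or_ge α l).elim (hval α) fun h => (c α h).trans (c' α h).symm
  rfl

@[simp] theorem restrict_len (x : Node) (β : Ordinal) : (x.restrict β).len = β := rfl

theorem restrict_val_of_lt (x : Node) {α β : Ordinal} (h : α < β) :
    (x.restrict β).val α = x.val α := if_pos h

theorem restrict_self (x : Node) : x.restrict x.len = x :=
  ext rfl fun _ h => x.restrict_val_of_lt h

theorem restrict_restrict (x : Node) {β γ : Ordinal} (h : β ≤ γ) :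
    (x.restrict γ).restrict β = x.restrict β :=
  ext rfl fun α (hα : α < β) => by
    rw [restrict_val_of_lt _ hα, restrict_val_of_lt _ hα, restrict_val_of_lt _ (hα.trans_le h)]

theorem restrict_extends (x : Node) {β : Ordinal} (h : x.len ≤ β) : (x.restrict β).Extends x :=
  ⟨h, fun _ hα => x.restrict_val_of_lt (hα.trans_le h)⟩

theorem restrict_succ_eq_of_extends {x y : Node} (h : y.Extends x) {γ : Ordinal}
    (hγ : γ + 1 < x.len) : y.restrict (γ + 1) = x.restrict (γ + 1) :=
  ext rfl fun α (hα : α < γ + 1) => by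
    rw [restrict_val_of_lt _ hα, restrict_val_of_lt _ hα, h.2 α (hα.trans hγ)]

theorem Extends.trans {τ σ ρ : Node} (h₁ : τ.Extends σ) (h₂ : σ.Extends ρ) : τ.Extends ρ :=
  ⟨h₂.1.trans h₁.1, fun α hα => (h₁.2 α (hα.trans_le h₂.1)).trans (h₂.2 α hα)⟩

@[simp] theorem append_len (x σ : Node) : (x.append σ).len = x.len + σ.len := rfl

theorem append_val_of_lt {x : Node} (σ : Node) {α : Ordinal} (h : α < x.len) :
    (x.append σ).val α = x.val α := if_pos h

theorem append_val_add (x σ : Node) (δ : Ordinal) : (x.append σ).val (x.len + δ) = σ.val δ := by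
  rw [Node.append]
  dsimp only
  rw [if_neg (not_lt.2 le_self_add), Ordinal.add_sub_cancel]

theorem lt_or_eq_add (x : Node) (α : Ordinal) : α < x.len ∨ ∃ δ, α = x.len + δ :=
  (lt_or_ge α x.len).imp_right fun h => ⟨α - x.len, (Ordinal.add_sub_cancel_of_le h).symm⟩

theorem append_of_len_eq_zero (x : Node) {σ : Node} (h : σ.len = 0) : x.append σ = x :=
  ext (by rw [append_len, h, add_zero]) fun α hα => by
    rw [append_len, h, add_zero] at hα
    exact append_val_of_lt σ hα

theorem append_extends_append (x : Node) {σ σ' : Node} (h : σ'.Extends σ) :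
    (x.append σ').Extends (x.append σ) := by
  refine ⟨by simpa using h.1, fun α hα => ?_⟩
  obtain hα' | ⟨δ, rfl⟩ := x.lt_or_eq_add α
  · rw [append_val_of_lt _ hα', append_val_of_lt _ hα']
  · rw [append_len, add_lt_add_iff_left] at hα
    rw [append_val_add, append_val_add, h.2 δ hα]

theorem restrict_append_of_le {x : Node} (σ : Node) {β : Ordinal} (h : β ≤ x.len) :
    (x.append σ).restrict β = x.restrict β :=
  ext rfl fun α (hα : α < β) => by
    rw [restrict_val_of_lt _ hα, restrict_val_of_lt _ hα, append_val_of_lt σ (hα.trans_le h)]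

theorem restrict_append_add (x σ : Node) (δ : Ordinal) :
    (x.append σ).restrict (x.len + δ) = x.append (σ.restrict δ) :=
  ext rfl fun α hα => by
    rw [restrict_len] at hα
    rw [restrict_val_of_lt _ hα]
    obtain h | ⟨ε, rfl⟩ := x.lt_or_eq_add α
    · rw [append_val_of_lt _ h, append_val_of_lt _ h]
    · rw [add_lt_add_iff_left] at hα
      rw [append_val_add, append_val_add, restrict_val_of_lt _ hα]

@[simp] theorem snoc_len (σ : Node) (b : Bool) : (σ.snoc b).len = σ.len + 1 := rfl

theorem snoc_val_len (σ : Node) (b : Bool) : (σ.snoc b).val σ.len = b := if_pos rfl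

theorem snoc_val_of_lt {σ : Node} (b : Bool) {α : Ordinal} (h : α < σ.len) :
    (σ.snoc b).val α = σ.val α := if_neg h.ne

theorem len_lt_snoc_len (σ : Node) (b : Bool) : σ.len < (σ.snoc b).len :=
  Order.lt_add_one_iff.2 le_rfl

theorem snoc_extends (σ : Node) (b : Bool) : (σ.snoc b).Extends σ :=
  ⟨(σ.len_lt_snoc_len b).le, fun _ hα => snoc_val_of_lt b hα⟩

theorem eq_of_extends_snoc {ν ρ : Node} {b b' : Bool} (h : ν.Extends (ρ.snoc b))
    (h' : ν.Extends (ρ.snoc b')) : b = b' := by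
  have e := h.2 ρ.len (ρ.len_lt_snoc_len b)
  have e' := h'.2 ρ.len (ρ.len_lt_snoc_len b')
  rw [snoc_val_len] at e e'
  exact e.symm.trans e'

theorem eq_snoc_restrict {σ : Node} {β : Ordinal} (h : σ.len = β + 1) :
    σ = (σ.restrict β).snoc (σ.val β) :=
  ext (by rw [snoc_len, restrict_len, h]) fun α hα => by
    rw [h, Order.lt_add_one_iff] at hα
    rcases hα.lt_or_eq with hα | rfl
    · rw [snoc_val_of_lt _ hα, restrict_val_of_lt _ hα]
    · exact (snoc_val_len _ _).symm

theorem len_eq_zero_or_eq_snoc {σ : Node} (hσ : σ.len < Ordinal.omega0) :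
    σ.len = 0 ∨ ∃ ρ : Node, ∃ b, ρ.len < Ordinal.omega0 ∧ σ = ρ.snoc b := by
  obtain ⟨_ | t, ht⟩ := Ordinal.lt_omega0.1 hσ
  · exact Or.inl (by simpa using ht)
  · refine Or.inr ⟨σ.restrict t, σ.val t, Ordinal.natCast_lt_omega0 t, eq_snoc_restrict ?_⟩
    rw [ht, Nat.cast_succ]

theorem snoc_len_lt_omega0 {σ : Node} (b : Bool) (h : σ.len < Ordinal.omega0) :
    (σ.snoc b).len < Ordinal.omega0 :=
  Ordinal.isSuccLimit_omega0.add_one_lt h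

theorem dagger_append_snoc (x σ : Node) (b : Bool) :
    (x.append (σ.snoc b)).dagger = x.append (σ.snoc (!b)) := by
  have hlen : (x.append (σ.snoc b)).len = x.len + σ.len + 1 := by
    rw [append_len, snoc_len, add_assoc]
  have hs : IsSucc (x.append (σ.snoc b)).len := ⟨_, hlen⟩
  have hc : Classical.choose hs = x.len + σ.len := by
    simpa using (Classical.choose_spec hs).symm.trans hlen
  rw [Node.dagger, dif_pos hs]
  refine ext (by simp) fun α hα => ?_
  dsimp only at hα ⊢
  rw [hc]
  rw [hlen] at hα
  obtain h | ⟨ε, rfl⟩ := x.lt_or_eq_add α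
  · rw [if_neg (h.trans_le le_self_add).ne, append_val_of_lt _ h, append_val_of_lt _ h]
  · rw [append_val_add, append_val_add]
    rw [add_assoc, add_lt_add_iff_left, Order.lt_add_one_iff] at hα
    rcases hα.lt_or_eq with hε | rfl
    · rw [if_neg (by simpa using hε.ne), snoc_val_of_lt _ hε, snoc_val_of_lt _ hε]
    · rw [if_pos rfl, snoc_val_len, snoc_val_len]

def segment (y : Node) (β δ : Ordinal) : Node where
  len := δ
  val := fun i => if i < δ then y.val (β + i) else false
  canon := fun _ h => if_neg (not_lt.2 h)

theorem segment_val_of_lt (y : Node) (β : Ordinal) {δ i : Ordinal} (h : i < δ) :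
    (y.segment β δ).val i = y.val (β + i) := if_pos h

theorem restrict_add_eq_append_segment {x y : Node} (h : y.Extends x) (δ : Ordinal) :
    y.restrict (x.len + δ) = x.append (y.segment x.len δ) :=
  ext rfl fun α hα => by
    rw [restrict_len] at hα
    rw [restrict_val_of_lt _ hα]
    obtain hα' | ⟨ε, rfl⟩ := x.lt_or_eq_add α
    · rw [append_val_of_lt _ hα', h.2 α hα']
    · rw [add_lt_add_iff_left] at hα
      rw [append_val_add, segment_val_of_lt _ _ hα]

theorem segment_add_one (y : Node) (β δ : Ordinal) :
    y.segment β (δ + 1) = (y.segment β δ).snoc (y.val (β + δ)) :=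
  ext rfl fun α hα => by
    change α < δ + 1 at hα
    rw [segment_val_of_lt _ _ hα]
    rw [Order.lt_add_one_iff] at hα
    rcases hα.lt_or_eq with hα | rfl
    · rw [snoc_val_of_lt _ hα, segment_val_of_lt _ _ hα]
    · exact (snoc_val_len _ _).symm

theorem segment_extends_segment (y : Node) (β : Ordinal) {δ δ' : Ordinal} (h : δ ≤ δ') :
    (y.segment β δ').Extends (y.segment β δ) :=
  ⟨h, fun _ (hα : _ < δ) => by
    rw [segment_val_of_lt _ _ hα, segment_val_of_lt _ _ (hα.trans_le h)]⟩

theorem segment_extends_snoc_segment (y : Node) (β : Ordinal) {δ δ' : Ordinal} (h : δ < δ') :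
    (y.segment β δ').Extends ((y.segment β δ).snoc (y.val (β + δ))) := by
  rw [← segment_add_one]
  exact y.segment_extends_segment β (Order.add_one_le_of_lt h)

end Node

open Function

def CoveredBefore (s : Ordinal → Set ℕ) (α : Ordinal) (A : Set ℕ) : Prop :=
  ∃ F : Finset Ordinal, (∀ γ ∈ F, γ < α) ∧ A ⊆ unionFin s F

namespace CoveredBefore

variable {s t : Ordinal → Set ℕ} {α : Ordinal} {A B : Set ℕ}

theorem mono (h : CoveredBefore s α B) (hAB : A ⊆ B) : CoveredBefore s α A :=
  let ⟨F, hF, hB⟩ := h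
  ⟨F, hF, hAB.trans hB⟩

theorem empty : CoveredBefore s α ∅ := ⟨∅, by simp, empty_subset _⟩

theorem of_subset_term {γ : Ordinal} (hγ : γ < α) (h : A ⊆ s γ) : CoveredBefore s α A :=
  ⟨{γ}, by simpa using hγ, by simpa [unionFin] using h⟩

theorem union (hA : CoveredBefore s α A) (hB : CoveredBefore s α B) :
    CoveredBefore s α (A ∪ B) := by
  classical
  obtain ⟨F, hF, hAF⟩ := hA
  obtain ⟨G, hG, hBG⟩ := hB
  refine ⟨F ∪ G, fun γ hγ => (Finset.mem_union.1 hγ).elim (hF γ) (hG γ), ?_⟩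
  simp only [unionFin, Finset.set_biUnion_union]
  exact union_subset_union hAF hBG

theorem biUnion_finset {ι : Type*} {I : Finset ι} {A : ι → Set ℕ}
    (h : ∀ i ∈ I, CoveredBefore s α (A i)) : CoveredBefore s α (⋃ i ∈ I, A i) := by
  classical
  induction I using Finset.induction_on with
  | empty => simpa using empty
  | insert i I _ ih =>
    rw [Finset.set_biUnion_insert]
    exact (h i (Finset.mem_insert_self i I)).union
      (ih fun j hj => h j (Finset.mem_insert_of_mem hj))

end CoveredBefore

theorem coveredBefore_congr {s t : Ordinal → Set ℕ} {α : Ordinal} {A : Set ℕ}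
    (hst : ∀ γ < α, s γ = t γ) : CoveredBefore s α A ↔ CoveredBefore t α A := by
  refine exists_congr fun F => and_congr_right fun hF => ?_
  simp only [unionFin, iUnion₂_congr fun γ hγ => hst γ (hF γ hγ)]

theorem coherentOn_iff {D : Set Ordinal} {s : Ordinal → Set ℕ} :
    CoherentOn D s ↔ ∀ α β, α ≤ β → β ∈ D →
      CoveredBefore s α (s α ∩ s β) ∨ CoveredBefore s α (s α \ s β) := by
  simp only [CoherentOn, CoveredBefore, sdiff_subset_iff, ← exists_or, ← and_or_left]

theorem properOn_iff {D : Set Ordinal} {s : Ordinal → Set ℕ} :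
    ProperOn D s ↔ ∀ β ∈ D, ¬ CoveredBefore s β (s β) := by
  simp [ProperOn, CoveredBefore]

theorem disjoint_self_disjointed_of_lt {α : Type*} {f : ℕ → Set α} {m n : ℕ} (h : m < n) :
    Disjoint (f m) (disjointed f n) := by
  rw [disjointed_apply]
  exact disjoint_sdiff_right.mono_left (Finset.le_sup (f := f) (Finset.mem_Iio.2 h))

theorem subset_biUnion_disjointed {α : Type*} (f : ℕ → Set α) (n : ℕ) :
    f n ⊆ ⋃ k ∈ Finset.range (n + 1), disjointed f k := by
  rw [biUnion_range_succ_disjointed]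
  exact le_partialSups f n

theorem cSeq_eq_disjointed (a : Node → Set ℕ) (x : Node) (eb : ℕ → Ordinal) :
    cSeq a x eb = disjointed (fun n => branchSeq a x (eb n)) := by
  have hunion : ∀ n, cUnion a x eb n = (Finset.Iio n).sup fun k => branchSeq a x (eb k) := by
    intro n
    induction n with
    | zero => rfl
    | succ n ih =>
      rw [cUnion, ih, union_sdiff_self, Nat.Iio_eq_range, Nat.Iio_eq_range, Finset.range_add_one,
        Finset.sup_insert]
      exact union_comm _ _
  funext n
  rw [cSeq, disjointed_apply, hunion]
  rfl

def IsSaturated {ι α : Type*} (c : ι → Set α) (A : Set α) : Prop :=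
  ∀ k, c k ⊆ A ∨ Disjoint (c k) A

theorem IsSaturated.compl {ι α : Type*} {c : ι → Set α} {A : Set α} (h : IsSaturated c A) :
    IsSaturated c Aᶜ :=
  fun k => (h k).symm.imp subset_compl_iff_disjoint_right.2 disjoint_compl_right_iff_subset.2

theorem mem_biUnion_of_pairwise_disjoint_iff {ι α : Type*} {c : ι → Set α}
    (hc : Pairwise (Disjoint on c)) (S : Set ι) {k : ι} {p : α} (hp : p ∈ c k) :
    p ∈ ⋃ j ∈ S, c j ↔ k ∈ S := by
  refine ⟨fun h => ?_, fun hk => mem_biUnion hk hp⟩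
  obtain ⟨j, hj, hpj⟩ := mem_iUnion₂.1 h
  obtain rfl : j = k := by_contra fun hjk => (hc hjk).ne_of_mem hpj hp rfl
  exact hj

theorem isSaturated_biUnion {ι α : Type*} {c : ι → Set α} (hc : Pairwise (Disjoint on c))
    (S : Set ι) :
    IsSaturated c (⋃ j ∈ S, c j) := fun k => by
  by_cases hk : k ∈ S
  · exact Or.inl (subset_biUnion_of_mem hk)
  · exact Or.inr (disjoint_left.2 fun p hp h =>
      hk ((mem_biUnion_of_pairwise_disjoint_iff hc S hp).1 h))

section Covering

variable {s : Ordinal → Set ℕ} {r : ℕ → Ordinal}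

theorem coveredBefore_inter_disjointed_or_diff
    (hcoh : ∀ n k, r n ≤ r k → CoveredBefore s (r n) (s (r n) ∩ s (r k)) ∨
      CoveredBefore s (r n) (s (r n) \ s (r k))) (n k : ℕ) :
    CoveredBefore s (r n) (s (r n) ∩ disjointed (s ∘ r) k) ∨
      CoveredBefore s (r n) (s (r n) \ s (r k)) := by
  rcases lt_or_ge (r k) (r n) with h | h
  · exact Or.inl (.of_subset_term h (inter_subset_right.trans (disjointed_subset _ k)))
  · exact (hcoh n k h).imp_left fun hc =>
      hc.mono (inter_subset_inter_right _ (disjointed_subset _ k))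

theorem exists_coveredBefore_diff_disjointed
    (hcoh : ∀ n k, r n ≤ r k → CoveredBefore s (r n) (s (r n) ∩ s (r k)) ∨
      CoveredBefore s (r n) (s (r n) \ s (r k))) (n : ℕ) :
    ∃ k, CoveredBefore s (r n) (s (r n) \ disjointed (s ∘ r) k) := by
  classical
  set f := s ∘ r
  have hex : ∃ k, k = n ∨ ¬ CoveredBefore s (r n) (f n ∩ disjointed f k) := ⟨n, Or.inl rfl⟩
  obtain ⟨k₀, hk₀, hbelow⟩ : ∃ k₀, (k₀ = n ∨ ¬ CoveredBefore s (r n) (f n ∩ disjointed f k₀)) ∧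
      ∀ k < k₀, CoveredBefore s (r n) (f n ∩ disjointed f k) :=
    ⟨Nat.find hex, Nat.find_spec hex, fun k hk => not_not.1 fun h => Nat.find_min hex hk (Or.inr h)⟩
  -- Either `f n` misses all later cells, or `f n ⊆ f k₀` up to a cover, and `f k₀` misses them.
  have habove : ∀ k, k₀ < k → CoveredBefore s (r n) (f n ∩ disjointed f k) := by
    intro k hk
    rcases hk₀ with rfl | h
    · simpa [(disjoint_self_disjointed_of_lt hk).inter_eq] using CoveredBefore.empty
    · refine ((coveredBefore_inter_disjointed_or_diff hcoh n k₀).resolve_left h).mono ?_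
      exact fun p hp =>
        ⟨hp.1, fun hp' => (disjoint_self_disjointed_of_lt hk).ne_of_mem hp' hp.2 rfl⟩
  change ∃ k, CoveredBefore s (r n) (f n \ disjointed f k)
  refine ⟨k₀, (CoveredBefore.biUnion_finset (I := (Finset.range (n + 1)).erase k₀)
    (A := fun k => f n ∩ disjointed f k) fun k hk => ?_).mono fun p hp => ?_⟩
  · rcases lt_or_gt_of_ne (Finset.ne_of_mem_erase hk) with h | h
    exacts [hbelow k h, habove k h]
  · obtain ⟨k, hk, hpk⟩ := mem_iUnion₂.1 (subset_biUnion_disjointed f n hp.1)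
    exact mem_iUnion₂.2 ⟨k, Finset.mem_erase.2 ⟨fun h => hp.2 (h ▸ hpk), hk⟩, hp.1, hpk⟩

theorem coveredBefore_inter_or_diff_of_isSaturated
    (hcoh : ∀ n k, r n ≤ r k → CoveredBefore s (r n) (s (r n) ∩ s (r k)) ∨
      CoveredBefore s (r n) (s (r n) \ s (r k)))
    {A : Set ℕ} (hA : IsSaturated (disjointed (s ∘ r)) A) (n : ℕ) :
    CoveredBefore s (r n) (s (r n) ∩ A) ∨ CoveredBefore s (r n) (s (r n) \ A) := by
  obtain ⟨k, hk⟩ := exists_coveredBefore_diff_disjointed hcoh n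
  rcases hA k with h | h
  · exact Or.inr (hk.mono (sdiff_subset_sdiff_right h))
  · exact Or.inl (hk.mono fun p hp => ⟨hp.1, fun hpk => h.ne_of_mem hpk hp.2 rfl⟩)

end Covering

theorem not_isSucc_of_isSuccLimit {o : Ordinal} (h : Order.IsSuccLimit o) : ¬ IsSucc o := by
  rintro ⟨β, rfl⟩
  exact (h.add_one_lt (Order.lt_add_one_iff.2 le_rfl)).false

theorem omega0_lt_omega1 : Ordinal.omega0 < omega1 := by
  rw [omega1, Cardinal.ord_aleph]
  exact Ordinal.omega0_lt_omega_one

theorem add_lt_omega1 {α β : Ordinal} (hα : α < omega1) (hβ : β < omega1) : α + β < omega1 :=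
  Ordinal.isPrincipal_add_ord (Cardinal.aleph0_le_aleph 1) hα hβ

theorem append_mem_appendSet (x : Node) {σ : Node} (hσ : σ.len < Ordinal.omega0) :
    x.append σ ∈ appendSet x :=
  ⟨σ, hσ, rfl⟩

theorem mem_appendSet_self (x : Node) : x ∈ appendSet x :=
  ⟨x.restrict 0, Ordinal.omega0_pos, (x.append_of_len_eq_zero rfl).symm⟩

theorem goodTree_union_appendSet {Γ : Set Node} {x : Node} (hΓ : GoodTree Γ) (hx : x ∈ XGamma Γ)
    (hcount : x.len < omega1) (hlim : Order.IsSuccLimit x.len) :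
    GoodTree (Γ ∪ appendSet x) where
  lt_omega1 := by
    rintro σ (h | ⟨ρ, hρ, rfl⟩)
    · exact hΓ.lt_omega1 σ h
    · exact add_lt_omega1 hcount (hρ.trans omega0_lt_omega1)
  downward := by
    rintro σ (h | ⟨ρ, hρ, rfl⟩) β hβ
    · exact Or.inl (hΓ.downward σ h β hβ)
    rcases lt_trichotomy β x.len with h | rfl | h
    · rw [Node.restrict_append_of_le _ h.le]
      exact Or.inl (hx.2.2 β h)
    · rw [Node.restrict_append_of_le _ le_rfl, Node.restrict_self]
      exact Or.inr (mem_appendSet_self x)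
    · obtain ⟨δ, rfl⟩ := (x.lt_or_eq_add β).resolve_left h.not_gt
      rw [Node.restrict_append_add]
      rw [Node.append_len, add_le_add_iff_left] at hβ
      exact Or.inr (append_mem_appendSet x (hβ.trans_lt hρ))
  twinned := by
    rintro σ (h | ⟨ρ, hρ, rfl⟩)
    · exact Or.inl (hΓ.twinned σ h)
    obtain h | ⟨τ, b, hτ, rfl⟩ := Node.len_eq_zero_or_eq_snoc hρ
    · rw [x.append_of_len_eq_zero h, Node.dagger, dif_neg (not_isSucc_of_isSuccLimit hlim)]
      exact Or.inr (mem_appendSet_self x)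
    · rw [Node.dagger_append_snoc]
      exact Or.inr (append_mem_appendSet x (Node.snoc_len_lt_omega0 _ hτ))
  noMax := by
    rintro σ (h | ⟨ρ, hρ, rfl⟩)
    · obtain ⟨τ, hτ, hlt, hext⟩ := hΓ.noMax σ h
      exact ⟨τ, Or.inl hτ, hlt, hext⟩
    · refine ⟨x.append (ρ.snoc false),
        Or.inr (append_mem_appendSet x (Node.snoc_len_lt_omega0 _ hρ)), ?_, ?_⟩
      · simp
      · exact x.append_extends_append (ρ.snoc_extends false)

theorem pairwise_disjoint_cSeq (a : Node → Set ℕ) (x : Node) (eb : ℕ → Ordinal) :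
    Pairwise (Disjoint on cSeq a x eb) := by
  rw [cSeq_eq_disjointed]
  exact disjoint_disjointed _

theorem disjoint_branchSeq_cSeq {a : Node → Set ℕ} {x : Node} {eb : ℕ → Ordinal} {n k : ℕ}
    (h : n < k) : Disjoint (branchSeq a x (eb n)) (cSeq a x eb k) := by
  rw [cSeq_eq_disjointed]
  exact disjoint_self_disjointed_of_lt (f := fun n => branchSeq a x (eb n)) h

namespace ExtEquations

variable {e : ℕ → Node} {π : ℕ → ℕ} {a a' : Node → Set ℕ} {x : Node} {eb : ℕ → Ordinal}
  {ρ : Node}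

theorem apply_snoc_not (heq : ExtEquations e π a x eb a') (hρ : ρ.len < Ordinal.omega0)
    (b : Bool) : a' (x.append (ρ.snoc (!b))) = (a' (x.append (ρ.snoc b)))ᶜ := by
  cases b
  · exact (heq.2 ρ hρ).2
  · rw [(heq.2 ρ hρ).2, compl_compl]
    rfl

theorem mem_apply_iff (heq : ExtEquations e π a x eb a') (hρ : ρ.len < Ordinal.omega0)
    {b : Bool} {k p : ℕ} (hp : p ∈ cSeq a x eb k) :
    p ∈ a' (x.append (ρ.snoc b)) ↔ ((e (π k)).Extends (ρ.snoc true) ↔ b = false) := by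
  have hfalse := (heq.2 ρ hρ).1
  cases b
  · rw [hfalse, mem_biUnion_of_pairwise_disjoint_iff (pairwise_disjoint_cSeq a x eb) _ hp]
    simp
  · rw [← Bool.not_false, heq.apply_snoc_not hρ, mem_compl_iff, hfalse,
      mem_biUnion_of_pairwise_disjoint_iff (pairwise_disjoint_cSeq a x eb) _ hp]
    simp

theorem isSaturated (heq : ExtEquations e π a x eb a') (hρ : ρ.len < Ordinal.omega0) (b : Bool) :
    IsSaturated (cSeq a x eb) (a' (x.append (ρ.snoc b))) := by
  have hsat := isSaturated_biUnion (pairwise_disjoint_cSeq a x eb)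
    {k | (e (π k)).Extends (ρ.snoc true)}
  rw [← (heq.2 ρ hρ).1] at hsat
  cases b
  · exact hsat
  · simpa [← Bool.not_false, heq.apply_snoc_not hρ] using hsat.compl

theorem cSeq_subset (heq : ExtEquations e π a x eb a') (hρ : ρ.len < Ordinal.omega0)
    {b : Bool} {k : ℕ} (hk : (e (π k)).Extends (ρ.snoc (!b))) :
    cSeq a x eb k ⊆ a' (x.append (ρ.snoc b)) := fun p hp => by
  rw [heq.mem_apply_iff hρ hp]
  cases b
  · simpa using hk
  · simpa using fun h => absurd (Node.eq_of_extends_snoc h hk) (by decide)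

theorem disjoint_cSeq (heq : ExtEquations e π a x eb a') (hρ : ρ.len < Ordinal.omega0)
    {b : Bool} {k : ℕ} (hk : (e (π k)).Extends (ρ.snoc b)) :
    Disjoint (cSeq a x eb k) (a' (x.append (ρ.snoc b))) :=
  disjoint_left.2 fun p hp => by
    rw [heq.mem_apply_iff hρ hp]
    cases b
    · simpa using fun h => absurd (Node.eq_of_extends_snoc h hk) (by decide)
    · simpa using hk

theorem inter_eq_empty_or_subset (heq : ExtEquations e π a x eb a')
    (hρ : ρ.len < Ordinal.omega0) {ρ' : Node} (hρ' : ρ'.len < Ordinal.omega0) {b : Bool}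
    (h : ρ'.Extends (ρ.snoc b)) (b' : Bool) :
    a' (x.append (ρ.snoc b)) ∩ a' (x.append (ρ'.snoc b')) = ∅ ∨
      a' (x.append (ρ.snoc b)) ⊆ a' (x.append (ρ'.snoc b')) := by
  have hdisj : Disjoint (a' (x.append (ρ.snoc b))) (a' (x.append (ρ'.snoc false))) := by
    rw [(heq.2 ρ' hρ').1, disjoint_iUnion₂_right]
    exact fun k hk => (heq.disjoint_cSeq hρ (hk.trans ((ρ'.snoc_extends true).trans h))).symm
  cases b'
  · exact Or.inl hdisj.inter_eq
  · rw [← Bool.not_false, heq.apply_snoc_not hρ']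
    exact Or.inr (subset_compl_iff_disjoint_right.2 hdisj)

end ExtEquations

theorem exists_cSeq_nonempty_extends {e : ℕ → Node} {π : ℕ → ℕ} {a : Node → Set ℕ} {x : Node}
    {eb : ℕ → Ordinal} (he : ∀ j, (e j).len < Ordinal.omega0)
    (hL : ∀ σ : Node, σ.len < Ordinal.omega0 →
      ∃ j ∈ π '' { n : ℕ | cSeq a x eb n ≠ ∅ }, (e j).Extends σ)
    {ρ : Node} (hρ : ρ.len < Ordinal.omega0) (N : ℕ) :
    ∃ k, N ≤ k ∧ (cSeq a x eb k).Nonempty ∧ (e (π k)).Extends ρ := by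
  -- Only strings `σ_{π k}` with `k ≥ N` can extend a string longer than all `σ_{π k}`, `k < N`.
  set M := (Finset.range N).sup fun k => (e (π k)).len
  have hM : M < Ordinal.omega0 := (Finset.sup_lt_iff Ordinal.omega0_pos).2 fun k _ => he _
  obtain ⟨_, ⟨k, hk, rfl⟩, hext⟩ := hL (ρ.restrict (max ρ.len M + 1))
    (Ordinal.isSuccLimit_omega0.add_one_lt (max_lt hρ hM))
  refine ⟨k, ?_, nonempty_iff_ne_empty.2 hk,
    hext.trans (ρ.restrict_extends ((le_max_left _ _).trans le_self_add))⟩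
  by_contra! hkN
  have hlen : (e (π k)).len ≤ M :=
    Finset.le_sup (f := fun k => (e (π k)).len) (Finset.mem_range.2 hkN)
  have hlt : M < (e (π k)).len :=
    (Order.lt_add_one_iff.2 (le_max_right _ _)).trans_le hext.1
  exact hlt.not_ge hlen

section Branch

variable {Γ : Set Node} {a a' : Node → Set ℕ} {x y : Node}

theorem branchSeq_eq_of_restrict_mem (hΓ : GoodTree Γ) (haΓ : ∀ σ ∈ Γ, a' σ = a σ)
    {β : Ordinal} (hβ : y.restrict (β + 1) ∈ Γ) {γ : Ordinal} (hγ : γ ≤ β) :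
    branchSeq a' y γ = branchSeq a y γ := by
  have hγβ : γ + 1 ≤ β + 1 := add_le_add_left hγ 1
  have hmem := hΓ.downward _ hβ (γ + 1) hγβ
  rw [y.restrict_restrict hγβ] at hmem
  exact haΓ _ hmem

theorem branchSeq_eq_of_extends (hx : x ∈ XGamma Γ) (hlim : Order.IsSuccLimit x.len)
    (haΓ : ∀ σ ∈ Γ, a' σ = a σ) (hy : y.Extends x) {γ : Ordinal} (hγ : γ < x.len) :
    branchSeq a' y γ = branchSeq a x γ := by
  have hγ' := hlim.add_one_lt hγ
  rw [branchSeq, Node.restrict_succ_eq_of_extends hy hγ']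
  exact haΓ _ (hx.2.2 _ hγ')

theorem branchSeq_add (hy : y.Extends x) (m : ℕ) :
    branchSeq a' y (x.len + m) =
      a' (x.append ((y.segment x.len m).snoc (y.val (x.len + m)))) := by
  rw [branchSeq, add_assoc, Node.restrict_add_eq_append_segment hy, Node.segment_add_one]

theorem extends_of_mem_branchDomain (hlim : Order.IsSuccLimit x.len) {β : Ordinal}
    (hβ : β ∈ branchDomain (Γ ∪ appendSet x) y) (hΓ : y.restrict (β + 1) ∉ Γ) :
    y.Extends x ∧ ∃ m : ℕ, β = x.len + m := by
  obtain ⟨σ, hσ, hyσ⟩ := hβ.2.resolve_left hΓ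
  have hlen : β + 1 = x.len + σ.len := congrArg Node.len hyσ
  refine ⟨⟨le_self_add.trans (hlen ▸ hβ.1), fun α hα => ?_⟩, ?_⟩
  · have hαβ : α < β + 1 := hlen ▸ hα.trans_le le_self_add
    rw [← y.restrict_val_of_lt hαβ, hyσ, Node.append_val_of_lt _ hα]
  · obtain h | ⟨ρ, b, hρ, rfl⟩ := Node.len_eq_zero_or_eq_snoc hσ
    · rw [h, add_zero] at hlen
      exact absurd ⟨β, hlen.symm⟩ (not_isSucc_of_isSuccLimit hlim)
    · obtain ⟨m, hm⟩ := Ordinal.lt_omega0.1 hρ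
      rw [Node.snoc_len, ← add_assoc, hm] at hlen
      exact ⟨m, by simpa using hlen⟩

end Branch

section Extension

variable {Γ : Set Node} {a a' : Node → Set ℕ} {x y : Node} {eb : ℕ → Ordinal}
  {e : ℕ → Node} {π : ℕ → ℕ}

theorem IsTAlgebra.coveredBefore_branchSeq (hT : IsTAlgebra Γ a) (hx : x ∈ XGamma Γ)
    (hlim : Order.IsSuccLimit x.len) {α β : Ordinal} (hαβ : α ≤ β) (hβ : β < x.len) :
    CoveredBefore (branchSeq a x) α (branchSeq a x α ∩ branchSeq a x β) ∨
      CoveredBefore (branchSeq a x) α (branchSeq a x α \ branchSeq a x β) :=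
  coherentOn_iff.1 (hT.branch_coherent x hx.1) α β hαβ
    ⟨(hlim.add_one_lt hβ).le, hx.2.2 _ (hlim.add_one_lt hβ)⟩

theorem coveredBefore_inter_or_diff_of_lt (hT : IsTAlgebra Γ a) (hx : x ∈ XGamma Γ)
    (hlim : Order.IsSuccLimit x.len) (hebran : ∀ n, eb n < x.len)
    (hebsurj : ∀ α < x.len, ∃ n, eb n = α) (haΓ : ∀ σ ∈ Γ, a' σ = a σ)
    (heq : ExtEquations e π a x eb a') (hy : y.Extends x) (m : ℕ) {α : Ordinal}
    (hα : α < x.len) :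
    CoveredBefore (branchSeq a' y) α (branchSeq a' y α ∩ branchSeq a' y (x.len + m)) ∨
      CoveredBefore (branchSeq a' y) α (branchSeq a' y α \ branchSeq a' y (x.len + m)) := by
  obtain ⟨n, rfl⟩ := hebsurj α hα
  have hsat := heq.isSaturated (ρ := y.segment x.len m) (Ordinal.natCast_lt_omega0 m)
    (y.val (x.len + m))
  rw [← branchSeq_add (a' := a') hy, cSeq_eq_disjointed] at hsat
  have hold : ∀ γ < eb n, branchSeq a' y γ = branchSeq a x γ := fun γ hγ =>
    branchSeq_eq_of_extends hx hlim haΓ hy (hγ.trans hα)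
  rw [coveredBefore_congr hold, coveredBefore_congr hold,
    branchSeq_eq_of_extends hx hlim haΓ hy hα]
  exact coveredBefore_inter_or_diff_of_isSaturated (s := branchSeq a x) (r := eb)
    (fun n k h => hT.coveredBefore_branchSeq hx hlim h (hebran k)) hsat n

theorem coveredBefore_inter_or_diff_add (heq : ExtEquations e π a x eb a') (hy : y.Extends x)
    {d m : ℕ} (hdm : d ≤ m) :
    CoveredBefore (branchSeq a' y) (x.len + d)
        (branchSeq a' y (x.len + d) ∩ branchSeq a' y (x.len + m)) ∨
      CoveredBefore (branchSeq a' y) (x.len + d)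
        (branchSeq a' y (x.len + d) \ branchSeq a' y (x.len + m)) := by
  rcases hdm.lt_or_eq with h | rfl
  · rw [branchSeq_add hy, branchSeq_add hy]
    rcases heq.inter_eq_empty_or_subset (Ordinal.natCast_lt_omega0 d)
      (Ordinal.natCast_lt_omega0 m)
      (y.segment_extends_snoc_segment x.len (Nat.cast_lt.2 h)) (y.val (x.len + m)) with h | h
    · exact Or.inl (h ▸ CoveredBefore.empty)
    · exact Or.inr (sdiff_eq_empty.2 h ▸ CoveredBefore.empty)
  · exact Or.inr (sdiff_self ▸ CoveredBefore.empty)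

theorem not_coveredBefore_add (hx : x ∈ XGamma Γ) (hlim : Order.IsSuccLimit x.len)
    (hebsurj : ∀ α < x.len, ∃ n, eb n = α) (he : ∀ j, (e j).len < Ordinal.omega0)
    (hL : ∀ σ : Node, σ.len < Ordinal.omega0 →
      ∃ j ∈ π '' { n : ℕ | cSeq a x eb n ≠ ∅ }, (e j).Extends σ)
    (haΓ : ∀ σ ∈ Γ, a' σ = a σ) (heq : ExtEquations e π a x eb a') (hy : y.Extends x)
    (m : ℕ) : ¬ CoveredBefore (branchSeq a' y) (x.len + m) (branchSeq a' y (x.len + m)) := by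
  rintro ⟨F, hF, hcov⟩
  choose! g hg using fun γ (_ : γ ∈ F) (hγ : γ < x.len) => hebsurj γ hγ
  have hm : (y.segment x.len m).len < Ordinal.omega0 := Ordinal.natCast_lt_omega0 m
  obtain ⟨k, hNk, ⟨p, hp⟩, hk⟩ := exists_cSeq_nonempty_extends he hL
    (Node.snoc_len_lt_omega0 (!y.val (x.len + m)) hm) (F.sup g + 1)
  have hpm : p ∈ branchSeq a' y (x.len + m) := by
    rw [branchSeq_add hy]
    exact heq.cSeq_subset hm hk hp
  obtain ⟨γ, hγF, hpγ⟩ := mem_iUnion₂.1 (hcov hpm)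
  obtain hγ | ⟨δ, rfl⟩ := x.lt_or_eq_add γ
  · rw [branchSeq_eq_of_extends hx hlim haΓ hy hγ, ← hg γ hγF hγ] at hpγ
    have hgk : g γ < k := Nat.lt_of_lt_of_le (Nat.lt_add_one_of_le (Finset.le_sup hγF)) hNk
    exact (disjoint_branchSeq_cSeq hgk).ne_of_mem hpγ hp rfl
  · have hδ : δ < m := by simpa using hF _ hγF
    obtain ⟨d, rfl⟩ := Ordinal.lt_omega0.1 (hδ.trans (Ordinal.natCast_lt_omega0 m))
    rw [branchSeq_add hy] at hpγ
    have hext := hk.trans ((Node.snoc_extends _ _).trans (y.segment_extends_snoc_segment x.len hδ))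
    exact (heq.disjoint_cSeq (Ordinal.natCast_lt_omega0 d) hext).ne_of_mem hp hpγ rfl

theorem coherentOn_branchDomain_union (hT : IsTAlgebra Γ a) (hx : x ∈ XGamma Γ)
    (hlim : Order.IsSuccLimit x.len) (hebran : ∀ n, eb n < x.len)
    (hebsurj : ∀ α < x.len, ∃ n, eb n = α) (haΓ : ∀ σ ∈ Γ, a' σ = a σ)
    (heq : ExtEquations e π a x eb a') (hy : y.len ≤ omega1) :
    CoherentOn (branchDomain (Γ ∪ appendSet x) y) (branchSeq a' y) := by
  refine coherentOn_iff.2 fun α β hαβ hβ => ?_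
  by_cases hΓ : y.restrict (β + 1) ∈ Γ
  · have hold : ∀ γ ≤ β, branchSeq a' y γ = branchSeq a y γ := fun γ =>
      branchSeq_eq_of_restrict_mem hT.tree haΓ hΓ
    rw [coveredBefore_congr fun γ hγ => hold γ (hγ.le.trans hαβ),
      coveredBefore_congr fun γ hγ => hold γ (hγ.le.trans hαβ), hold α hαβ, hold β le_rfl]
    exact coherentOn_iff.1 (hT.branch_coherent y hy) α β hαβ ⟨hβ.1, hΓ⟩
  obtain ⟨hyx, m, rfl⟩ := extends_of_mem_branchDomain hlim hβ hΓ
  obtain hα | ⟨δ, rfl⟩ := x.lt_or_eq_add α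
  · exact coveredBefore_inter_or_diff_of_lt hT hx hlim hebran hebsurj haΓ heq hyx m hα
  · have hδ : δ ≤ m := by simpa using hαβ
    obtain ⟨d, rfl⟩ := Ordinal.lt_omega0.1 (hδ.trans_lt (Ordinal.natCast_lt_omega0 m))
    exact coveredBefore_inter_or_diff_add heq hyx (Nat.cast_le.1 hδ)

theorem properOn_branchDomain_union (hT : IsTAlgebra Γ a) (hx : x ∈ XGamma Γ)
    (hlim : Order.IsSuccLimit x.len) (hebsurj : ∀ α < x.len, ∃ n, eb n = α)
    (he : ∀ j, (e j).len < Ordinal.omega0)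
    (hL : ∀ σ : Node, σ.len < Ordinal.omega0 →
      ∃ j ∈ π '' { n : ℕ | cSeq a x eb n ≠ ∅ }, (e j).Extends σ)
    (haΓ : ∀ σ ∈ Γ, a' σ = a σ) (heq : ExtEquations e π a x eb a') (hy : y.len ≤ omega1) :
    ProperOn (branchDomain (Γ ∪ appendSet x) y) (branchSeq a' y) := by
  refine properOn_iff.2 fun β hβ => ?_
  by_cases hΓ : y.restrict (β + 1) ∈ Γ
  · have hold : ∀ γ ≤ β, branchSeq a' y γ = branchSeq a y γ := fun γ =>
      branchSeq_eq_of_restrict_mem hT.tree haΓ hΓ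
    rw [coveredBefore_congr fun γ hγ => hold γ hγ.le, hold β le_rfl]
    exact properOn_iff.1 (hT.branch_proper y hy) β ⟨hβ.1, hΓ⟩
  obtain ⟨hyx, m, rfl⟩ := extends_of_mem_branchDomain hlim hβ hΓ
  exact not_coveredBefore_add hx hlim hebsurj he hL haΓ heq hyx m

theorem apply_eq_empty_of_not_isSucc (hT : IsTAlgebra Γ a) (haΓ : ∀ σ ∈ Γ, a' σ = a σ)
    (heq : ExtEquations e π a x eb a') :
    ∀ σ ∈ Γ ∪ appendSet x, ¬ IsSucc σ.len → a' σ = ∅ := by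
  rintro σ (h | ⟨ρ, hρ, rfl⟩) hσ
  · rw [haΓ σ h]
    exact hT.empty_of_not_succ σ h hσ
  obtain h | ⟨τ, b, -, rfl⟩ := Node.len_eq_zero_or_eq_snoc hρ
  · rw [x.append_of_len_eq_zero h]
    exact heq.1
  · exact absurd ⟨x.len + τ.len, by simp [add_assoc]⟩ hσ

theorem apply_dagger_eq_compl (hT : IsTAlgebra Γ a) (hlim : Order.IsSuccLimit x.len)
    (haΓ : ∀ σ ∈ Γ, a' σ = a σ) (heq : ExtEquations e π a x eb a') :
    ∀ σ ∈ Γ ∪ appendSet x, IsSucc σ.len → a' σ.dagger = (a' σ)ᶜ := by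
  rintro σ (h | ⟨ρ, hρ, rfl⟩) hσ
  · rw [haΓ _ (hT.tree.twinned σ h), haΓ σ h]
    exact hT.compl_dagger σ h hσ
  obtain h | ⟨τ, b, hτ, rfl⟩ := Node.len_eq_zero_or_eq_snoc hρ
  · rw [x.append_of_len_eq_zero h] at hσ
    exact absurd hσ (not_isSucc_of_isSuccLimit hlim)
  · rw [Node.dagger_append_snoc]
    exact heq.apply_snoc_not hτ b

end Extension

theorem stmt13_general (Γ : Set Node) (a : Node → Set ℕ) (hT : IsTAlgebra Γ a)
    (x : Node) (hx : x ∈ XGamma Γ) (hcount : x.len < omega1)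
    (hlim : Order.IsSuccLimit x.len)
    (eb : ℕ → Ordinal)
    (hebran : ∀ n, eb n < x.len) (hebsurj : ∀ α < x.len, ∃ n, eb n = α)
    (π : ℕ → ℕ)
    (e : ℕ → Node) (he : IsStdEnum e)
    (hL : ∀ σ : Node, σ.len < Ordinal.omega0 →
      ∃ j ∈ π '' { n : ℕ | cSeq a x eb n ≠ ∅ }, (e j).Extends σ)
    (a' : Node → Set ℕ) (haΓ : ∀ σ ∈ Γ, a' σ = a σ)
    (heq : ExtEquations e π a x eb a') :
    IsTAlgebra (Γ ∪ appendSet x) a' :=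
  { tree := goodTree_union_appendSet hT.tree hx hcount hlim
    empty_of_not_succ := apply_eq_empty_of_not_isSucc hT haΓ heq
    compl_dagger := apply_dagger_eq_compl hT hlim haΓ heq
    branch_coherent := fun _ hy =>
      coherentOn_branchDomain_union hT hx hlim hebran hebsurj haΓ heq hy
    branch_proper := fun _ hy =>
      properOn_branchDomain_union hT hx hlim hebsurj he.1 hL haΓ heq hy }

/-- Extending a `𝕋`-algebra through a countable maximal branch `x ∈ X(Γ,ℵ₀)` via a
bijection `e : ℕ → λ_x`, a permutation `π` and the sets `c_n`: if
`[σ] ∩ {σ_k : k ∈ π[L_x]} ≠ ∅` for every `σ ∈ 2^{<ω}`, then the extended family is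
a `𝕋`-algebra on `Γ^x = Γ ∪ {x⌢σ : σ ∈ 2^{<ω}}`. -/
theorem stmt13 (Γ : Set Node) (a : Node → Set ℕ) (hT : IsTAlgebra Γ a)
    (x : Node) (hx : x ∈ XGamma Γ) (hcount : x.len < omega1)
    (hinf : Ordinal.omega0 ≤ x.len) (hlim : Order.IsSuccLimit x.len)
    (eb : ℕ → Ordinal) (hebinj : Function.Injective eb)
    (hebran : ∀ n, eb n < x.len) (hebsurj : ∀ α < x.len, ∃ n, eb n = α)
    (π : ℕ → ℕ) (hπ : Function.Bijective π)
    (e : ℕ → Node) (he : IsStdEnum e)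
    (hL : ∀ σ : Node, σ.len < Ordinal.omega0 →
      ∃ j ∈ π '' { n : ℕ | cSeq a x eb n ≠ ∅ }, (e j).Extends σ)
    (a' : Node → Set ℕ) (haΓ : ∀ σ ∈ Γ, a' σ = a σ)
    (heq : ExtEquations e π a x eb a') :
    IsTAlgebra (Γ ∪ appendSet x) a' :=
  stmt13_general Γ a hT x hx hcount hlim eb hebran hebsurj π e he hL a' haΓ heq

end
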